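/- arXiv:2409.03545 — 5 statements merged into one kernel-verified Lean document; each statement's English description precedes it below -/
import Mathlib

section
/- Suppose for every subset A ⊆ [m] we can obtain a set C_A with |C_A| ≤ k and Σ_{i∈A} f_i(C_A) ≥ α · max_{|S|≤k} Σ_{i∈A} f_i(S), for some fixed α ∈ [0,1]. Then the best pair (C_A, C_{[m]\A}) over all partitions A of [m], evaluated by Σ_{i∈[m]} max{f_i(C_A), f_i(C_{[m]\A})}, achieves value at least α · OPT_0, where OPT_0 = max over pairs (S_1,S_2), |S_1|,|S_2| ≤ k, of Σ_{i∈[m]} max{f_i(S_1), f_i(S_2)}. -/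
open scoped BigOperators

/-- (Enumeration-based Algorithm.) If for every `A ⊆ [m]` an
`a`-approximate maximizer `C A` of `S ↦ ∑_{i ∈ A} f i S` over sets of size at most `k`
is available, then the best pair `(C A, C Aᶜ)` over all partitions of `[m]`
achieves at least `a · OPT₀`. -/
theorem enumeration_algorithm_guarantee {α : Type*} [Fintype α] [DecidableEq α]
    (m k : ℕ) (f : Fin m → Finset α → ℝ) (hf : ∀ i S, 0 ≤ f i S)
    (a : ℝ) (ha0 : 0 ≤ a) (ha1 : a ≤ 1)
    (C : Finset (Fin m) → Finset α) (hCcard : ∀ A, (C A).card ≤ k)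
    (hCapprox : ∀ A : Finset (Fin m),
      a * (⨆ S : {S : Finset α // S.card ≤ k}, ∑ i ∈ A, f i S.1) ≤ ∑ i ∈ A, f i (C A)) :
    a * (⨆ S1 : {S : Finset α // S.card ≤ k}, ⨆ S2 : {S : Finset α // S.card ≤ k},
          ∑ i, max (f i S1.1) (f i S2.1))
      ≤ ⨆ A : Finset (Fin m), ∑ i, max (f i (C A)) (f i (C Aᶜ)) := by
  have hne : Nonempty {S : Finset α // S.card ≤ k} := ⟨⟨∅, by simp⟩⟩
  -- get a maximizing pair
  obtain ⟨⟨S1, S2⟩, hmax⟩ := Finite.exists_max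
    (fun p : {S : Finset α // S.card ≤ k} × {S : Finset α // S.card ≤ k} =>
      ∑ i, max (f i p.1.1) (f i p.2.1))
  have hsup : (⨆ S1 : {S : Finset α // S.card ≤ k}, ⨆ S2 : {S : Finset α // S.card ≤ k},
      ∑ i, max (f i S1.1) (f i S2.1)) ≤ ∑ i, max (f i S1.1) (f i S2.1) :=
    ciSup_le fun T1 => ciSup_le fun T2 => hmax (T1, T2)
  set A : Finset (Fin m) := Finset.univ.filter (fun i => f i S2.1 ≤ f i S1.1) with hA
  have hsplit : ∑ i, max (f i S1.1) (f i S2.1)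
      = ∑ i ∈ A, f i S1.1 + ∑ i ∈ Aᶜ, f i S2.1 := by
    rw [← Finset.sum_filter_add_sum_filter_not Finset.univ (fun i => f i S2.1 ≤ f i S1.1)]
    congr 1
    · apply Finset.sum_congr rfl
      intro i hi
      simp only [Finset.mem_filter] at hi
      exact max_eq_left hi.2
    · rw [show Aᶜ = Finset.univ.filter (fun i => ¬ f i S2.1 ≤ f i S1.1) by
        ext i; simp [hA]]
      apply Finset.sum_congr rfl
      intro i hi
      simp only [Finset.mem_filter] at hi
      exact max_eq_right (le_of_not_ge hi.2)
  have key1 : a * ∑ i ∈ A, f i S1.1 ≤ ∑ i ∈ A, f i (C A) := by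
    refine le_trans ?_ (hCapprox A)
    apply mul_le_mul_of_nonneg_left _ ha0
    exact le_ciSup (f := fun S : {S : Finset α // S.card ≤ k} => ∑ i ∈ A, f i S.1)
      (Set.Finite.bddAbove (Set.finite_range _)) S1
  have key2 : a * ∑ i ∈ Aᶜ, f i S2.1 ≤ ∑ i ∈ Aᶜ, f i (C Aᶜ) := by
    refine le_trans ?_ (hCapprox Aᶜ)
    apply mul_le_mul_of_nonneg_left _ ha0
    exact le_ciSup (f := fun S : {S : Finset α // S.card ≤ k} => ∑ i ∈ Aᶜ, f i S.1)
      (Set.Finite.bddAbove (Set.finite_range _)) S2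
  have hfinal : ∑ i ∈ A, f i (C A) + ∑ i ∈ Aᶜ, f i (C Aᶜ)
      ≤ ∑ i, max (f i (C A)) (f i (C Aᶜ)) := by
    rw [← Finset.sum_add_sum_compl A (fun i => max (f i (C A)) (f i (C Aᶜ)))]
    gcongr with i _ i _
    · exact le_max_left _ _
    · exact le_max_right _ _
  calc a * (⨆ S1 : {S : Finset α // S.card ≤ k}, ⨆ S2 : {S : Finset α // S.card ≤ k},
          ∑ i, max (f i S1.1) (f i S2.1))
      ≤ a * (∑ i ∈ A, f i S1.1 + ∑ i ∈ Aᶜ, f i S2.1) := by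
        rw [← hsplit]; exact mul_le_mul_of_nonneg_left hsup ha0
    _ = a * ∑ i ∈ A, f i S1.1 + a * ∑ i ∈ Aᶜ, f i S2.1 := by ring
    _ ≤ ∑ i ∈ A, f i (C A) + ∑ i ∈ Aᶜ, f i (C Aᶜ) := add_le_add key1 key2
    _ ≤ ∑ i, max (f i (C A)) (f i (C Aᶜ)) := hfinal
    _ ≤ _ := le_ciSup (f := fun A : Finset (Fin m) => ∑ i, max (f i (C A)) (f i (C Aᶜ)))
      (Set.Finite.bddAbove (Set.finite_range _)) A
end

section
/- Suppose for every A ⊆ [m] we can compute C_A with |C_A| ≤ k and Σ_{i∈A} f_i(C_A) ≥ α · max_{|S|≤k} Σ_{i∈A} f_i(S). Then for ANY single partition (A, B) of [m] (in particular a random one), the pair (C_A, C_B) satisfies Σ_{i∈[m]} max{f_i(C_A), f_i(C_B)} ≥ (α/2) · OPT_0. -/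
open scoped BigOperators

/-- (Sampling-based Algorithm, partition-independent bound.)
With `a`-approximate group maximizers `C A`, for *any single* partition `(A, Aᶜ)`
of `[m]`, the pair `(C A, C Aᶜ)` achieves at least `(a / 2) · OPT₀`. -/
theorem single_partition_guarantee {α : Type*} [Fintype α] [DecidableEq α]
    (m k : ℕ) (f : Fin m → Finset α → ℝ) (hf : ∀ i S, 0 ≤ f i S)
    (a : ℝ) (ha0 : 0 ≤ a) (ha1 : a ≤ 1)
    (C : Finset (Fin m) → Finset α) (hCcard : ∀ A, (C A).card ≤ k)
    (hCapprox : ∀ A : Finset (Fin m),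
      a * (⨆ S : {S : Finset α // S.card ≤ k}, ∑ i ∈ A, f i S.1) ≤ ∑ i ∈ A, f i (C A))
    (A : Finset (Fin m)) :
    a / 2 * (⨆ S1 : {S : Finset α // S.card ≤ k}, ⨆ S2 : {S : Finset α // S.card ≤ k},
        ∑ i, max (f i S1.1) (f i S2.1))
      ≤ ∑ i, max (f i (C A)) (f i (C Aᶜ)) := by
  haveI : Nonempty {S : Finset α // S.card ≤ k} := ⟨⟨∅, by simp⟩⟩
  set M : Finset (Fin m) → ℝ :=
    fun B => ⨆ S : {S : Finset α // S.card ≤ k}, ∑ i ∈ B, f i S.1 with hM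
  have hbdd : ∀ B : Finset (Fin m),
      BddAbove (Set.range fun S : {S : Finset α // S.card ≤ k} => ∑ i ∈ B, f i S.1) :=
    fun B => (Set.finite_range _).bddAbove
  have hle : ∀ (B : Finset (Fin m)) (S : {S : Finset α // S.card ≤ k}),
      ∑ i ∈ B, f i S.1 ≤ M B := fun B S => le_ciSup (hbdd B) S
  -- OPT ≤ 2 * (M A + M Aᶜ)
  have h1 : (⨆ S1 : {S : Finset α // S.card ≤ k}, ⨆ S2 : {S : Finset α // S.card ≤ k},
      ∑ i, max (f i S1.1) (f i S2.1)) ≤ 2 * (M A + M Aᶜ) := by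
    refine Real.iSup_le (fun S1 => Real.iSup_le (fun S2 => ?_) ?_) ?_
    · have hsplit : ∑ i, max (f i S1.1) (f i S2.1)
          = (∑ i ∈ A, max (f i S1.1) (f i S2.1))
            + ∑ i ∈ Aᶜ, max (f i S1.1) (f i S2.1) :=
        (Finset.sum_add_sum_compl A _).symm
      have hA : ∑ i ∈ A, max (f i S1.1) (f i S2.1) ≤ M A + M A := by
        calc ∑ i ∈ A, max (f i S1.1) (f i S2.1)
            ≤ ∑ i ∈ A, (f i S1.1 + f i S2.1) :=
              Finset.sum_le_sum (fun i _ => max_le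
                (le_add_of_nonneg_right (hf i S2.1))
                (le_add_of_nonneg_left (hf i S1.1)))
          _ = (∑ i ∈ A, f i S1.1) + ∑ i ∈ A, f i S2.1 := Finset.sum_add_distrib
          _ ≤ M A + M A := add_le_add (hle A S1) (hle A S2)
      have hAc : ∑ i ∈ Aᶜ, max (f i S1.1) (f i S2.1) ≤ M Aᶜ + M Aᶜ := by
        calc ∑ i ∈ Aᶜ, max (f i S1.1) (f i S2.1)
            ≤ ∑ i ∈ Aᶜ, (f i S1.1 + f i S2.1) :=
              Finset.sum_le_sum (fun i _ => max_le
                (le_add_of_nonneg_right (hf i S2.1))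
                (le_add_of_nonneg_left (hf i S1.1)))
          _ = (∑ i ∈ Aᶜ, f i S1.1) + ∑ i ∈ Aᶜ, f i S2.1 := Finset.sum_add_distrib
          _ ≤ M Aᶜ + M Aᶜ := add_le_add (hle Aᶜ S1) (hle Aᶜ S2)
      rw [hsplit]; linarith
    all_goals {
      have h0A : (0:ℝ) ≤ M A := le_trans (Finset.sum_nonneg fun i _ => hf i _)
        (hle A ⟨∅, by simp⟩)
      have h0Ac : (0:ℝ) ≤ M Aᶜ := le_trans (Finset.sum_nonneg fun i _ => hf i _)
        (hle Aᶜ ⟨∅, by simp⟩)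
      linarith }
  have h2 : a * (M A + M Aᶜ) ≤ ∑ i, max (f i (C A)) (f i (C Aᶜ)) := by
    have hsplit : ∑ i, max (f i (C A)) (f i (C Aᶜ))
        = (∑ i ∈ A, max (f i (C A)) (f i (C Aᶜ)))
          + ∑ i ∈ Aᶜ, max (f i (C A)) (f i (C Aᶜ)) :=
      (Finset.sum_add_sum_compl A _).symm
    have hA : a * M A ≤ ∑ i ∈ A, max (f i (C A)) (f i (C Aᶜ)) :=
      le_trans (hCapprox A) (Finset.sum_le_sum fun i _ => le_max_left _ _)
    have hAc : a * M Aᶜ ≤ ∑ i ∈ Aᶜ, max (f i (C A)) (f i (C Aᶜ)) :=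
      le_trans (hCapprox Aᶜ) (Finset.sum_le_sum fun i _ => le_max_right _ _)
    rw [hsplit]; nlinarith
  calc a / 2 * (⨆ S1 : {S : Finset α // S.card ≤ k}, ⨆ S2 : {S : Finset α // S.card ≤ k},
        ∑ i, max (f i S1.1) (f i S2.1))
      ≤ a / 2 * (2 * (M A + M Aᶜ)) :=
        mul_le_mul_of_nonneg_left h1 (by linarith)
    _ = a * (M A + M Aᶜ) := by ring
    _ ≤ _ := h2
end

section
/- With T independent uniform random partitions (A_t, B_t) of [m], and α-approximate solutions C_1^t, C_2^t computed for each side, the best pair over all T rounds satisfies, in expectation: max_t Σ_{i∈[m]} max{f_i(C_1^t), f_i(C_2^t)} ≥ α · γ(T) · (1/2 + ε/√m) · OPT_0, where γ(T) = 1 − (1/2 + ε·e/π)^T. -/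
open scoped BigOperators Classical


lemma sup'_fin_succ {X : Type*} {T : ℕ} (w : X → ℝ) (x : X) (g : Fin (T+1) → X) :
    (Finset.univ.sup' ⟨⟨0, Nat.succ_pos _⟩, Finset.mem_univ _⟩
      (fun t : Fin (T+2) => w ((Fin.cons x g : Fin (T+2) → X) t)))
    = max (w x) (Finset.univ.sup' ⟨⟨0, Nat.succ_pos _⟩, Finset.mem_univ _⟩
      (fun t : Fin (T+1) => w (g t))) := by
  apply le_antisymm
  · apply Finset.sup'_le
    intro t _
    refine Fin.cases ?_ ?_ t
    · simp
    · intro s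
      simp only [Fin.cons_succ]
      exact le_max_of_le_right (Finset.le_sup' (fun t : Fin (T+1) => w (g t)) (Finset.mem_univ s))
  · apply max_le
    · have := Finset.le_sup' (fun t : Fin (T+2) => w ((Fin.cons x g : Fin (T+2) → X) t)) (Finset.mem_univ 0)
      simpa using this
    · apply Finset.sup'_le
      intro s _
      have := Finset.le_sup' (fun t : Fin (T+2) => w ((Fin.cons x g : Fin (T+2) → X) t)) (Finset.mem_univ s.succ)
      simpa using this

lemma aux_rounds {X : Type*} [Fintype X] [DecidableEq X] (w : X → ℝ) (hw : ∀ x, 0 ≤ w x)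
    (G : Finset X) (K : ℝ) (hG : K * G.card ≤ ∑ x ∈ G, w x) :
    ∀ T : ℕ, (hT : 0 < T) →
      K * ((Fintype.card X : ℝ) ^ T - ((Fintype.card X - G.card : ℕ) : ℝ) ^ T)
        ≤ ∑ As : Fin T → X, Finset.univ.sup' ⟨⟨0, hT⟩, Finset.mem_univ _⟩ (fun t => w (As t)) := by
  have hGle : G.card ≤ Fintype.card X := G.card_le_univ
  have hcast : ((Fintype.card X - G.card : ℕ) : ℝ) = (Fintype.card X : ℝ) - G.card :=
    Nat.cast_sub hGle
  intro T
  induction T with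
  | zero => intro h; exact absurd h (lt_irrefl 0)
  | succ T ih =>
    intro _
    cases T with
    | zero =>
      have hsum : ∑ As : Fin 1 → X, (Finset.univ.sup' ⟨⟨0, Nat.succ_pos _⟩, Finset.mem_univ _⟩
          (fun t => w (As t))) = ∑ x : X, w x := by
        rw [← (Equiv.funUnique (Fin 1) X).symm.sum_comp]
        apply Finset.sum_congr rfl
        intro x _
        apply le_antisymm
        · apply Finset.sup'_le; intro t _
          have : t = 0 := Subsingleton.elim _ _
          simp [this, Equiv.funUnique]
        · have := Finset.le_sup' (fun t : Fin 1 => w (((Equiv.funUnique (Fin 1) X).symm x) t))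
            (Finset.mem_univ 0)
          simpa [Equiv.funUnique] using this
      rw [hsum, hcast, pow_one, pow_one]
      have heq : (Fintype.card X : ℝ) - ((Fintype.card X : ℝ) - G.card) = G.card := by ring
      rw [heq]
      calc K * (G.card : ℝ) ≤ ∑ x ∈ G, w x := hG
        _ ≤ ∑ x : X, w x := Finset.sum_le_sum_of_subset_of_nonneg (Finset.subset_univ G)
            (fun i _ _ => hw i)
    | succ T =>
      have ih' := ih (Nat.succ_pos _)
      set S : (Fin (T+1) → X) → ℝ := fun g => Finset.univ.sup' ⟨⟨0, Nat.succ_pos _⟩, Finset.mem_univ _⟩ (fun t => w (g t)) with hS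
      have hre : ∑ As : Fin (T+2) → X, (Finset.univ.sup' ⟨⟨0, Nat.succ_pos _⟩, Finset.mem_univ _⟩
            (fun t => w (As t)))
          = ∑ p : X × (Fin (T+1) → X), max (w p.1) (S p.2) := by
        rw [← Equiv.sum_comp (Fin.consEquiv (fun _ : Fin (T+2) => X))
          (fun As : Fin (T+2) → X => (Finset.univ.sup' ⟨⟨0, Nat.succ_pos _⟩, Finset.mem_univ _⟩
            (fun t => w (As t))))]
        apply Finset.sum_congr rfl
        intro p _
        exact sup'_fin_succ w p.1 p.2
      rw [hre, Fintype.sum_prod_type]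
      have split : ∑ x : X, ∑ g : Fin (T+1) → X, max (w x) (S g)
          = (∑ x ∈ G, ∑ g : Fin (T+1) → X, max (w x) (S g))
            + ∑ x ∈ Gᶜ, ∑ g : Fin (T+1) → X, max (w x) (S g) :=
        (Finset.sum_add_sum_compl G _).symm
      rw [split]
      have h1 : ((Fintype.card X : ℝ))^(T+1) * (K * G.card) ≤ ∑ x ∈ G, ∑ g : Fin (T+1) → X, max (w x) (S g) := by
        calc ((Fintype.card X : ℝ))^(T+1) * (K * G.card)
            ≤ ((Fintype.card X : ℝ))^(T+1) * ∑ x ∈ G, w x := by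
              apply mul_le_mul_of_nonneg_left hG (by positivity)
          _ = ∑ x ∈ G, ∑ g : Fin (T+1) → X, w x := by
              rw [Finset.mul_sum]
              apply Finset.sum_congr rfl
              intro x _
              rw [Finset.sum_const, Finset.card_univ, Fintype.card_fun, nsmul_eq_mul]
              push_cast [Fintype.card_fin]
              ring
          _ ≤ _ := by
              apply Finset.sum_le_sum; intro x _
              apply Finset.sum_le_sum; intro g _
              exact le_max_left _ _
      have h2 : ((Fintype.card X - G.card : ℕ) : ℝ) * (K * ((Fintype.card X : ℝ) ^ (T+1) - ((Fintype.card X - G.card : ℕ) : ℝ) ^ (T+1)))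
          ≤ ∑ x ∈ Gᶜ, ∑ g : Fin (T+1) → X, max (w x) (S g) := by
        calc ((Fintype.card X - G.card : ℕ) : ℝ) * (K * ((Fintype.card X : ℝ) ^ (T+1) - ((Fintype.card X - G.card : ℕ) : ℝ) ^ (T+1)))
            ≤ ((Fintype.card X - G.card : ℕ) : ℝ) * ∑ g : Fin (T+1) → X, S g := by
              apply mul_le_mul_of_nonneg_left ih' (by positivity)
          _ = ∑ x ∈ Gᶜ, ∑ g : Fin (T+1) → X, S g := by
              rw [Finset.sum_const, Finset.card_compl, nsmul_eq_mul]
          _ ≤ _ := by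
              apply Finset.sum_le_sum; intro x _
              apply Finset.sum_le_sum; intro g _
              exact le_max_right _ _
      calc K * ((Fintype.card X : ℝ) ^ (T+2) - ((Fintype.card X - G.card : ℕ) : ℝ) ^ (T+2))
          = ((Fintype.card X : ℝ))^(T+1) * (K * G.card)
            + ((Fintype.card X - G.card : ℕ) : ℝ) * (K * ((Fintype.card X : ℝ) ^ (T+1) - ((Fintype.card X - G.card : ℕ) : ℝ) ^ (T+1))) := by
            rw [hcast]; ring
        _ ≤ _ := add_le_add h1 h2

lemma aux_weight (m : ℕ) (hm : 0 < m) (ε : ℝ) (g : Fin m → ℝ) (hg : ∀ i, 0 ≤ g i)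
    (D : Finset (Finset (Fin m)))
    (hD : ∀ B ∈ D, (m:ℝ)/2 + ε*Real.sqrt m ≤ (B.card:ℝ))
    (hDsym : ∀ (i j : Fin m) (B : Finset (Fin m)), B ∈ D → B.map (Equiv.swap i j).toEmbedding ∈ D) :
    (1/2 + ε/Real.sqrt m) * (∑ i, g i) * D.card ≤ ∑ B ∈ D, ∑ i ∈ B, g i := by
  classical
  set s := Real.sqrt m with hsdef
  have hs0 : 0 < s := Real.sqrt_pos.mpr (by exact_mod_cast hm)
  have hss : s * s = (m:ℝ) := Real.mul_self_sqrt (by positivity)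
  have hmpos : (0:ℝ) < m := by exact_mod_cast hm
  set c : Fin m → ℕ := fun i => (D.filter (fun B => i ∈ B)).card with hc
  have hinv : ∀ (i j : Fin m) (B : Finset (Fin m)),
      (B.map (Equiv.swap i j).toEmbedding).map (Equiv.swap i j).toEmbedding = B := by
    intro i j B
    ext x
    simp [Finset.mem_map_equiv, Equiv.symm_swap, Equiv.swap_apply_self]
  have hcsym : ∀ i j : Fin m, c i = c j := by
    intro i j
    refine Finset.card_bij' (fun B _ => B.map (Equiv.swap i j).toEmbedding)
      (fun B _ => B.map (Equiv.swap i j).toEmbedding) ?_ ?_ ?_ ?_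
    · intro B hB
      rw [Finset.mem_filter] at hB ⊢
      refine ⟨hDsym i j B hB.1, ?_⟩
      rw [Finset.mem_map_equiv]
      simpa [Equiv.symm_swap, Equiv.swap_apply_right] using hB.2
    · intro B hB
      rw [Finset.mem_filter] at hB ⊢
      refine ⟨hDsym i j B hB.1, ?_⟩
      rw [Finset.mem_map_equiv]
      simpa [Equiv.symm_swap, Equiv.swap_apply_left] using hB.2
    · intro B _; exact hinv i j B
    · intro B _; exact hinv i j B
  have hsumc : ∑ j : Fin m, c j = ∑ B ∈ D, B.card := by
    have h1 : ∀ B : Finset (Fin m), B.card = ∑ j : Fin m, (if j ∈ B then 1 else 0) := by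
      intro B
      rw [Finset.sum_ite_mem, Finset.univ_inter, Finset.card_eq_sum_ones]
    have h2 : ∀ j : Fin m, c j = ∑ B ∈ D, (if j ∈ B then 1 else 0) := by
      intro j
      rw [hc]
      simp only
      rw [Finset.card_eq_sum_ones, Finset.sum_filter]
    calc ∑ j : Fin m, c j = ∑ j : Fin m, ∑ B ∈ D, (if j ∈ B then 1 else 0) := by
          exact Finset.sum_congr rfl (fun j _ => h2 j)
      _ = ∑ B ∈ D, ∑ j : Fin m, (if j ∈ B then 1 else 0) := Finset.sum_comm
      _ = ∑ B ∈ D, B.card := Finset.sum_congr rfl (fun B _ => (h1 B).symm)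
  have hci : ∀ i : Fin m, (1/2 + ε/s) * D.card ≤ (c i : ℝ) := by
    intro i
    have h3 : ((m:ℝ)/2 + ε*s) * D.card ≤ (m:ℝ) * c i := by
      have he : (m:ℝ) * c i = ∑ j : Fin m, (c j : ℝ) := by
        rw [Finset.sum_congr rfl (fun j _ => by rw [hcsym j i])]
        simp [Finset.card_univ, mul_comm]
      rw [he]
      calc ((m:ℝ)/2 + ε*s) * D.card = ∑ _B ∈ D, ((m:ℝ)/2 + ε*s) := by
            rw [Finset.sum_const, nsmul_eq_mul]; ring
        _ ≤ ∑ B ∈ D, (B.card : ℝ) := Finset.sum_le_sum (fun B hB => hD B hB)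
        _ = ∑ j : Fin m, (c j : ℝ) := by exact_mod_cast congrArg Nat.cast hsumc.symm
    have hkey : ((m:ℝ)/2 + ε*s) * (D.card:ℝ) = (m:ℝ) * ((1/2 + ε/s) * D.card) := by
      rw [← hss]; field_simp
    rw [hkey] at h3
    exact le_of_mul_le_mul_left h3 hmpos
  have hw : ∑ B ∈ D, ∑ i ∈ B, g i = ∑ i : Fin m, g i * c i := by
    have h1 : ∀ B : Finset (Fin m), ∑ i ∈ B, g i = ∑ i : Fin m, (if i ∈ B then g i else 0) := by
      intro B
      rw [Finset.sum_ite_mem, Finset.univ_inter]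
    calc ∑ B ∈ D, ∑ i ∈ B, g i = ∑ B ∈ D, ∑ i : Fin m, (if i ∈ B then g i else 0) :=
          Finset.sum_congr rfl (fun B _ => h1 B)
      _ = ∑ i : Fin m, ∑ B ∈ D, (if i ∈ B then g i else 0) := Finset.sum_comm
      _ = ∑ i : Fin m, g i * c i := by
          apply Finset.sum_congr rfl
          intro i _
          rw [← Finset.sum_filter, Finset.sum_const, hc, nsmul_eq_mul, mul_comm]
  rw [hw]
  calc (1/2 + ε/s) * (∑ i, g i) * D.card = ∑ i : Fin m, g i * ((1/2 + ε/s) * D.card) := by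
        rw [← Finset.sum_mul]; ring
    _ ≤ ∑ i : Fin m, g i * c i :=
        Finset.sum_le_sum (fun i _ => mul_le_mul_of_nonneg_left (hci i) (hg i))


/-- (Sampling-based Algorithm after `T` rounds.) With `T`
independent uniform random partitions `(A_t, A_tᶜ)` of `[m]` and `a`-approximate
solutions `C1 (A_t)`, `C2 (A_t)` for the two sides, the expected value of the
best pair over the `T` rounds is at least
`a · γ(T) · (1/2 + ε/√m) · OPT₀`, where `γ(T) = 1 − (1/2 + ε·e/π)^T`.
The binomial anti-concentration bound is taken as hypothesis `hanti`. -/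
theorem sampling_algorithm_T_rounds {α : Type*} [Fintype α] [DecidableEq α]
    (m k : ℕ) (hm : 0 < m)
    (f : Fin m → Finset α → ℝ) (hf : ∀ i S, 0 ≤ f i S)
    (a ε : ℝ) (ha0 : 0 ≤ a) (ha1 : a ≤ 1) (hε : 0 < ε)
    (hrng : 0 ≤ 1 / 2 - ε * Real.exp 1 / Real.pi)
    (hanti : ∀ A' : Finset (Fin m), A'.Nonempty →
      1 / 2 - ε * Real.exp 1 / Real.pi ≤
        ((Finset.univ.filter (fun A : Finset (Fin m) =>
            (A'.card : ℝ) / 2 + ε * Real.sqrt (A'.card : ℝ) ≤ ((A ∩ A').card : ℝ))).card : ℝ)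
          / 2 ^ m)
    (C1 C2 : Finset (Fin m) → Finset α)
    (hC1card : ∀ A, (C1 A).card ≤ k) (hC2card : ∀ A, (C2 A).card ≤ k)
    (hC1approx : ∀ A : Finset (Fin m),
      a * (⨆ S : {S : Finset α // S.card ≤ k}, ∑ i ∈ A, f i S.1) ≤ ∑ i ∈ A, f i (C1 A))
    (hC2approx : ∀ A : Finset (Fin m),
      a * (⨆ S : {S : Finset α // S.card ≤ k}, ∑ i ∈ Aᶜ, f i S.1) ≤ ∑ i ∈ Aᶜ, f i (C2 A))
    (T : ℕ) (hT : 0 < T) :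
    a * (1 - (1 / 2 + ε * Real.exp 1 / Real.pi) ^ T) * (1 / 2 + ε / Real.sqrt m)
        * (⨆ S1 : {S : Finset α // S.card ≤ k}, ⨆ S2 : {S : Finset α // S.card ≤ k},
            ∑ i, max (f i S1.1) (f i S2.1))
      ≤ (∑ As : Fin T → Finset (Fin m),
          Finset.univ.sup' ⟨⟨0, hT⟩, Finset.mem_univ _⟩
            (fun t => ∑ i, max (f i (C1 (As t))) (f i (C2 (As t)))))
        / (2 ^ m) ^ T := by
  classical
  haveI : Nonempty (Fin m) := ⟨⟨0, hm⟩⟩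
  haveI hPne : Nonempty {S : Finset α // S.card ≤ k} := ⟨⟨∅, by simp⟩⟩
  have hπ : (0:ℝ) < Real.pi := Real.pi_pos
  have hc0 : 0 ≤ ε * Real.exp 1 / Real.pi := by positivity
  have hs0 : 0 < Real.sqrt m := Real.sqrt_pos.mpr (by exact_mod_cast hm)
  -- optimal pair
  obtain ⟨p, hp⟩ := Finite.exists_max
    (fun p : {S : Finset α // S.card ≤ k} × {S : Finset α // S.card ≤ k} =>
      ∑ i, max (f i p.1.1) (f i p.2.1))
  set g : Fin m → ℝ := fun i => max (f i p.1.1) (f i p.2.1) with hgdef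
  have hg0 : ∀ i, 0 ≤ g i := fun i => le_trans (hf i _) (le_max_left _ _)
  have hOPT : (⨆ S1 : {S : Finset α // S.card ≤ k}, ⨆ S2 : {S : Finset α // S.card ≤ k},
      ∑ i, max (f i S1.1) (f i S2.1)) ≤ ∑ i, g i :=
    ciSup_le fun S1 => ciSup_le fun S2 => hp (S1, S2)
  -- the matched-set map
  set A' : Finset (Fin m) := Finset.univ.filter (fun i => f i p.2.1 ≤ f i p.1.1) with hA'def
  set M : Finset (Fin m) → Finset (Fin m) := fun A => (A ∩ A') ∪ (Aᶜ ∩ A'ᶜ) with hMdef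
  have hMmem : ∀ (A : Finset (Fin m)) (i : Fin m),
      i ∈ M A ↔ ((i ∈ A ∧ i ∈ A') ∨ (i ∉ A ∧ i ∉ A')) := by
    intro A i
    simp [hMdef, Finset.mem_union, Finset.mem_inter, Finset.mem_compl]
  have hMM : ∀ A, M (M A) = A := by
    intro A
    ext i
    simp only [hMmem]
    tauto
  -- per-round bound
  have hval0 : ∀ A : Finset (Fin m), (0:ℝ) ≤ ∑ i, max (f i (C1 A)) (f i (C2 A)) :=
    fun A => Finset.sum_nonneg fun i _ => le_trans (hf i _) (le_max_left _ _)
  have hround : ∀ A : Finset (Fin m),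
      a * ∑ i ∈ M A, g i ≤ ∑ i, max (f i (C1 A)) (f i (C2 A)) := by
    intro A
    have hdisj : Disjoint (A ∩ A') (Aᶜ ∩ A'ᶜ) := by
      rw [Finset.disjoint_left]
      intro x hx hx2
      rw [Finset.mem_inter] at hx hx2
      rw [Finset.mem_compl] at hx2
      exact hx2.1 hx.1
    have hsplit : ∑ i ∈ M A, g i = ∑ i ∈ A ∩ A', g i + ∑ i ∈ Aᶜ ∩ A'ᶜ, g i :=
      Finset.sum_union hdisj
    have h1 : ∑ i ∈ A ∩ A', g i ≤ ∑ i ∈ A, f i p.1.1 := by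
      calc ∑ i ∈ A ∩ A', g i = ∑ i ∈ A ∩ A', f i p.1.1 := by
            apply Finset.sum_congr rfl
            intro i hi
            have hi' : i ∈ A' := (Finset.mem_inter.mp hi).2
            rw [hA'def, Finset.mem_filter] at hi'
            exact max_eq_left hi'.2
        _ ≤ ∑ i ∈ A, f i p.1.1 := Finset.sum_le_sum_of_subset_of_nonneg
            Finset.inter_subset_left (fun i _ _ => hf i _)
    have h2 : ∑ i ∈ Aᶜ ∩ A'ᶜ, g i ≤ ∑ i ∈ Aᶜ, f i p.2.1 := by
      calc ∑ i ∈ Aᶜ ∩ A'ᶜ, g i = ∑ i ∈ Aᶜ ∩ A'ᶜ, f i p.2.1 := by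
            apply Finset.sum_congr rfl
            intro i hi
            have hi' : i ∉ A' := Finset.mem_compl.mp (Finset.mem_inter.mp hi).2
            rw [hA'def, Finset.mem_filter] at hi'
            push_neg at hi'
            exact max_eq_right (le_of_lt (hi' (Finset.mem_univ i)))
        _ ≤ ∑ i ∈ Aᶜ, f i p.2.1 := Finset.sum_le_sum_of_subset_of_nonneg
            Finset.inter_subset_left (fun i _ _ => hf i _)
    have h3 : a * ∑ i ∈ A, f i p.1.1 ≤ ∑ i ∈ A, f i (C1 A) := by
      calc a * ∑ i ∈ A, f i p.1.1
          ≤ a * ⨆ S : {S : Finset α // S.card ≤ k}, ∑ i ∈ A, f i S.1 := by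
            apply mul_le_mul_of_nonneg_left _ ha0
            exact le_ciSup (f := fun S : {S : Finset α // S.card ≤ k} => ∑ i ∈ A, f i S.1)
              (Set.Finite.bddAbove (Set.finite_range _)) p.1
        _ ≤ _ := hC1approx A
    have h4 : a * ∑ i ∈ Aᶜ, f i p.2.1 ≤ ∑ i ∈ Aᶜ, f i (C2 A) := by
      calc a * ∑ i ∈ Aᶜ, f i p.2.1
          ≤ a * ⨆ S : {S : Finset α // S.card ≤ k}, ∑ i ∈ Aᶜ, f i S.1 := by
            apply mul_le_mul_of_nonneg_left _ ha0
            exact le_ciSup (f := fun S : {S : Finset α // S.card ≤ k} => ∑ i ∈ Aᶜ, f i S.1)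
              (Set.Finite.bddAbove (Set.finite_range _)) p.2
        _ ≤ _ := hC2approx A
    calc a * ∑ i ∈ M A, g i
        = a * ∑ i ∈ A ∩ A', g i + a * ∑ i ∈ Aᶜ ∩ A'ᶜ, g i := by rw [hsplit]; ring
      _ ≤ a * ∑ i ∈ A, f i p.1.1 + a * ∑ i ∈ Aᶜ, f i p.2.1 :=
          add_le_add (mul_le_mul_of_nonneg_left h1 ha0) (mul_le_mul_of_nonneg_left h2 ha0)
      _ ≤ ∑ i ∈ A, f i (C1 A) + ∑ i ∈ Aᶜ, f i (C2 A) := add_le_add h3 h4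
      _ ≤ ∑ i ∈ A, max (f i (C1 A)) (f i (C2 A)) + ∑ i ∈ Aᶜ, max (f i (C1 A)) (f i (C2 A)) :=
          add_le_add (Finset.sum_le_sum fun i _ => le_max_left _ _)
            (Finset.sum_le_sum fun i _ => le_max_right _ _)
      _ = ∑ i, max (f i (C1 A)) (f i (C2 A)) := Finset.sum_add_sum_compl A _
  -- good sets
  set D : Finset (Finset (Fin m)) := Finset.univ.filter
    (fun B : Finset (Fin m) => (m:ℝ)/2 + ε*Real.sqrt m ≤ (B.card:ℝ)) with hDdef
  set G : Finset (Finset (Fin m)) := Finset.univ.filter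
    (fun A : Finset (Fin m) => (m:ℝ)/2 + ε*Real.sqrt m ≤ ((M A).card:ℝ)) with hGdef
  have hGmem : ∀ A : Finset (Fin m), A ∈ G ↔ M A ∈ D := by
    intro A
    simp [hGdef, hDdef]
  have hGDsum : ∑ A ∈ G, ∑ i ∈ M A, g i = ∑ B ∈ D, ∑ i ∈ B, g i := by
    refine Finset.sum_nbij' M M ?_ ?_ ?_ ?_ ?_
    · intro A hA; exact (hGmem A).mp hA
    · intro B hB; rw [hGmem, hMM]; exact hB
    · intro A _; exact hMM A
    · intro B _; exact hMM B
    · intro A _; rfl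
  have hGDcard : G.card = D.card := by
    refine Finset.card_bij' (fun A _ => M A) (fun B _ => M B) ?_ ?_ ?_ ?_
    · intro A hA; exact (hGmem A).mp hA
    · intro B hB; rw [hGmem, hMM]; exact hB
    · intro A _; exact hMM A
    · intro B _; exact hMM B
  have hDprop : ∀ B ∈ D, (m:ℝ)/2 + ε*Real.sqrt m ≤ (B.card:ℝ) := by
    intro B hB
    rw [hDdef, Finset.mem_filter] at hB
    exact hB.2
  have hDsym : ∀ (i j : Fin m) (B : Finset (Fin m)), B ∈ D →
      B.map (Equiv.swap i j).toEmbedding ∈ D := by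
    intro i j B hB
    rw [hDdef, Finset.mem_filter] at hB ⊢
    exact ⟨Finset.mem_univ _, by rw [Finset.card_map]; exact hB.2⟩
  have hweight := aux_weight m hm ε g hg0 D hDprop hDsym
  set K : ℝ := a * ((1/2 + ε/Real.sqrt m) * ∑ i, g i) with hKdef
  have hK0 : 0 ≤ K := by
    apply mul_nonneg ha0
    apply mul_nonneg (by positivity)
    exact Finset.sum_nonneg fun i _ => hg0 i
  have hKG : K * G.card ≤ ∑ A ∈ G, ∑ i, max (f i (C1 A)) (f i (C2 A)) := by
    calc K * G.card = a * ((1/2 + ε/Real.sqrt m) * (∑ i, g i) * D.card) := by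
          rw [hGDcard, hKdef]; ring
      _ ≤ a * ∑ B ∈ D, ∑ i ∈ B, g i := mul_le_mul_of_nonneg_left hweight ha0
      _ = ∑ A ∈ G, a * ∑ i ∈ M A, g i := by rw [← hGDsum, Finset.mul_sum]
      _ ≤ ∑ A ∈ G, ∑ i, max (f i (C1 A)) (f i (C2 A)) :=
          Finset.sum_le_sum fun A _ => hround A
  have haux := aux_rounds (fun A : Finset (Fin m) => ∑ i, max (f i (C1 A)) (f i (C2 A)))
    hval0 G K hKG T hT
  -- cardinalities
  have hcardX : Fintype.card (Finset (Fin m)) = 2 ^ m := by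
    rw [Fintype.card_finset, Fintype.card_fin]
  -- anti-concentration: D is large
  have hDcard : (1/2 - ε * Real.exp 1 / Real.pi) * 2^m ≤ (D.card : ℝ) := by
    have huniv : (Finset.univ : Finset (Fin m)).Nonempty := Finset.univ_nonempty
    have h := hanti Finset.univ huniv
    have hfeq : (Finset.univ.filter (fun A : Finset (Fin m) =>
        ((Finset.univ : Finset (Fin m)).card : ℝ) / 2
          + ε * Real.sqrt ((Finset.univ : Finset (Fin m)).card : ℝ)
          ≤ ((A ∩ Finset.univ).card : ℝ))) = D := by
      apply Finset.filter_congr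
      intro A _
      simp [Finset.inter_univ, Finset.card_univ, Fintype.card_fin]
    rw [hfeq] at h
    have h2m : (0:ℝ) < 2^m := by positivity
    calc (1/2 - ε * Real.exp 1 / Real.pi) * 2^m ≤ ((D.card:ℝ)/2^m) * 2^m := by
          exact mul_le_mul_of_nonneg_right h (le_of_lt h2m)
      _ = (D.card:ℝ) := by field_simp
  set b : ℕ := Fintype.card (Finset (Fin m)) - G.card with hbdef
  have hbR : (b:ℝ) ≤ (1/2 + ε * Real.exp 1 / Real.pi) * 2^m := by
    have hle : G.card ≤ Fintype.card (Finset (Fin m)) := G.card_le_univ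
    have h1 : (b:ℝ) = (2:ℝ)^m - G.card := by
      rw [hbdef, Nat.cast_sub hle, hcardX]
      push_cast
      ring
    rw [h1, hGDcard]
    linarith [hDcard]
  have hb0 : (0:ℝ) ≤ (b:ℝ) := Nat.cast_nonneg b
  -- final chain
  have hq0 : (0:ℝ) ≤ 1/2 + ε * Real.exp 1 / Real.pi := by linarith
  have hq1 : (1:ℝ) ≥ 1/2 + ε * Real.exp 1 / Real.pi := by linarith
  have hγ0 : (0:ℝ) ≤ 1 - (1/2 + ε * Real.exp 1 / Real.pi)^T := by
    have := pow_le_one₀ (n := T) hq0 hq1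
    linarith
  have hd0 : (0:ℝ) ≤ 1/2 + ε / Real.sqrt m := by positivity
  have h2mT : (0:ℝ) < ((2:ℝ)^m)^T := by positivity
  rw [le_div_iff₀ h2mT]
  calc a * (1 - (1/2 + ε * Real.exp 1 / Real.pi) ^ T) * (1/2 + ε / Real.sqrt m)
        * (⨆ S1 : {S : Finset α // S.card ≤ k}, ⨆ S2 : {S : Finset α // S.card ≤ k},
            ∑ i, max (f i S1.1) (f i S2.1)) * ((2:ℝ)^m)^T
      ≤ a * (1 - (1/2 + ε * Real.exp 1 / Real.pi) ^ T) * (1/2 + ε / Real.sqrt m)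
          * (∑ i, g i) * ((2:ℝ)^m)^T := by
        apply mul_le_mul_of_nonneg_right _ (le_of_lt h2mT)
        apply mul_le_mul_of_nonneg_left hOPT
        exact mul_nonneg (mul_nonneg ha0 hγ0) hd0
    _ = K * ((((2:ℝ)^m)^T) - ((1/2 + ε * Real.exp 1 / Real.pi) * 2^m)^T) := by
        rw [hKdef, mul_pow]; ring
    _ ≤ K * ((((2:ℝ)^m)^T) - (b:ℝ)^T) := by
        apply mul_le_mul_of_nonneg_left _ hK0
        have := pow_le_pow_left₀ hb0 hbR T
        linarith
    _ ≤ ∑ As : Fin T → Finset (Fin m),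
          Finset.univ.sup' ⟨⟨0, hT⟩, Finset.mem_univ _⟩
            (fun t => ∑ i, max (f i (C1 (As t))) (f i (C2 (As t)))) := by
        have hc2 : ((Fintype.card (Finset (Fin m)) : ℕ) : ℝ) = (2:ℝ)^m := by
          rw [hcardX]; push_cast; ring
        calc K * ((((2:ℝ)^m)^T) - (b:ℝ)^T)
            = K * ((Fintype.card (Finset (Fin m)) : ℝ)^T - ((Fintype.card (Finset (Fin m)) - G.card : ℕ):ℝ)^T) := by
              rw [hc2, hbdef]
          _ ≤ _ := haux
end

section
/- There exist a finite ground set Ω and monotone submodular functions f_1,...,f_m : 2^Ω → ℝ≥0 such that the function F on the lifted ground set U = Ω × {1,2}, defined by F(T) = Σ_{i∈[m]} max{f_i(T_1), f_i(T_2)} where T_j = {x ∈ Ω : (x,j) ∈ T}, is not submodular. -/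
open scoped BigOperators

/-- The lifted objective on the ground set `U = Ω × {1,2}`: for `T ⊆ U`, let
`T_j = {x : (x, j) ∈ T}` and `Flift f T = ∑_i max (f i T₀) (f i T₁)`. -/
noncomputable def Flift {α : Type} [Fintype α] [DecidableEq α] {m : ℕ}
    (f : Fin m → Finset α → ℝ) (T : Finset (α × Fin 2)) : ℝ :=
  ∑ i, max (f i ((T.filter (fun p => p.2 = 0)).image Prod.fst))
           (f i ((T.filter (fun p => p.2 = 1)).image Prod.fst))

/-- There exist a finite ground set `Ω` and monotone,
submodular, nonnegative functions `f_1, …, f_m` such that the lifted function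
`F(T) = ∑_i max (f i T₁) (f i T₂)` on `Ω × {1,2}` is *not* submodular. -/
theorem lifted_function_not_submodular :
    ∃ (α : Type) (inst1 : Fintype α) (inst2 : DecidableEq α) (m : ℕ)
      (f : Fin m → Finset α → ℝ),
      (∀ i S, 0 ≤ f i S) ∧
      (∀ i, ∀ S T : Finset α, S ⊆ T → f i S ≤ f i T) ∧
      (∀ i, ∀ S T : Finset α, S ⊆ T → ∀ x, x ∉ T →
        f i (insert x T) - f i T ≤ f i (insert x S) - f i S) ∧
      ¬ (∀ U V : Finset (α × Fin 2), U ⊆ V → ∀ u, u ∉ V →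
          @Flift α inst1 inst2 m f (insert u V) - @Flift α inst1 inst2 m f V ≤
            @Flift α inst1 inst2 m f (insert u U) - @Flift α inst1 inst2 m f U) := by
  refine ⟨Fin 2, inferInstance, inferInstance, 1, fun _ S => (S.card : ℝ), ?_, ?_, ?_, ?_⟩
  · intro i S; positivity
  · intro i S T h
    show (S.card : ℝ) ≤ T.card
    exact_mod_cast Finset.card_le_card h
  · intro i S T hST x hxT
    have hxS : x ∉ S := fun h => hxT (hST h)
    show ((insert x T).card : ℝ) - T.card ≤ ((insert x S).card : ℝ) - S.card
    rw [Finset.card_insert_of_notMem hxT, Finset.card_insert_of_notMem hxS]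
    push_cast; norm_num
  · intro H
    have h := H {((0 : Fin 2), (0 : Fin 2))} {((0:Fin 2),(0:Fin 2)), ((0:Fin 2),(1:Fin 2))}
      (by decide) ((1:Fin 2),(1:Fin 2)) (by decide)
    simp only [Flift] at h
    norm_num [Finset.filter_insert, Finset.filter_singleton, Finset.image_insert, Finset.image_singleton] at h
end

section
/- Generalization to l candidates: suppose for every A ⊆ [m] we can compute C_A with |C_A| ≤ k and Σ_{i∈A} f_i(C_A) ≥ α · max_{|S|≤k} Σ_{i∈A} f_i(S). Then the best l-tuple (C_{A_1}, ..., C_{A_l}) over all partitions of [m] into l groups (A_1, ..., A_l), evaluated by Σ_{i∈[m]} max_{j∈[l]} f_i(C_{A_j}), achieves value at least α · OPT, where OPT = max over l-tuples (S_1,...,S_l) with each |S_j| ≤ k of Σ_{i∈[m]} max_{j∈[l]} f_i(S_j). -/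
open scoped BigOperators

/-- (Generalization to `l ≥ 2` candidates.) With
`a`-approximate group maximizers `C A`, the best `l`-tuple
`(C (P 0), …, C (P (l-1)))` over all partitions `P` of `[m]` into `l` groups
achieves at least `a · OPT`, where `OPT` is the optimum of the `l`-candidate
problem. -/
theorem enumeration_l_candidates {α : Type*} [Fintype α] [DecidableEq α]
    (m k l : ℕ) (hl : 2 ≤ l)
    (f : Fin m → Finset α → ℝ) (hf : ∀ i S, 0 ≤ f i S)
    (a : ℝ) (ha0 : 0 ≤ a) (ha1 : a ≤ 1)
    (C : Finset (Fin m) → Finset α) (hCcard : ∀ A, (C A).card ≤ k)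
    (hCapprox : ∀ A : Finset (Fin m),
      a * (⨆ S : {S : Finset α // S.card ≤ k}, ∑ i ∈ A, f i S.1) ≤ ∑ i ∈ A, f i (C A)) :
    a * (⨆ S : Fin l → {S : Finset α // S.card ≤ k},
          ∑ i, Finset.univ.sup' ⟨⟨0, by omega⟩, Finset.mem_univ _⟩
            (fun j => f i (S j).1))
      ≤ ⨆ P : {P : Fin l → Finset (Fin m) //
            (∀ j j', j ≠ j' → Disjoint (P j) (P j')) ∧
              (Finset.univ : Finset (Fin l)).biUnion P = Finset.univ},
          ∑ i, Finset.univ.sup' ⟨⟨0, by omega⟩, Finset.mem_univ _⟩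
            (fun j => f i (C (P.1 j))) := by
  classical
  have hS0 : Nonempty {S : Finset α // S.card ≤ k} := ⟨⟨∅, by simp⟩⟩
  have hune : ((Finset.univ : Finset (Fin l))).Nonempty :=
    ⟨⟨0, by omega⟩, Finset.mem_univ _⟩
  -- a nonneg lower bound for the RHS
  have hRHSnn : (0 : ℝ) ≤ ⨆ P : {P : Fin l → Finset (Fin m) //
        (∀ j j', j ≠ j' → Disjoint (P j) (P j')) ∧
          (Finset.univ : Finset (Fin l)).biUnion P = Finset.univ},
      ∑ i, Finset.univ.sup' ⟨⟨0, by omega⟩, Finset.mem_univ _⟩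
        (fun j => f i (C (P.1 j))) := by
    set P0 : Fin l → Finset (Fin m) := fun jj =>
      if jj = (⟨0, by omega⟩ : Fin l) then (Finset.univ : Finset (Fin m)) else ∅
      with hP0def
    have hP0 : (∀ j j' : Fin l, j ≠ j' → Disjoint (P0 j) (P0 j')) ∧
        (Finset.univ : Finset (Fin l)).biUnion P0 = Finset.univ := by
      constructor
      · intro j j' hjj
        by_cases h1 : j = (⟨0, by omega⟩ : Fin l)
        · have h2 : j' ≠ (⟨0, by omega⟩ : Fin l) := fun h => hjj (h1.trans h.symm)
          simp [hP0def, h1, h2]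
        · simp [hP0def, h1]
      · apply Finset.Subset.antisymm (fun x _ => Finset.mem_univ x)
        intro x _
        refine Finset.mem_biUnion.2 ⟨⟨0, by omega⟩, Finset.mem_univ _, ?_⟩
        simp [hP0def]
    refine le_trans ?_ (le_ciSup (Set.Finite.bddAbove (Set.finite_range _)) ⟨P0, hP0⟩)
    refine Finset.sum_nonneg fun i _ => le_trans (hf i (C (P0 ⟨0, by omega⟩))) ?_
    exact Finset.le_sup' (fun j => f i (C (P0 j)))
      (Finset.mem_univ (⟨0, by omega⟩ : Fin l))
  rw [Real.mul_iSup_of_nonneg ha0]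
  refine Real.iSup_le (fun S => ?_) hRHSnn
  -- choose for each i a maximizing index
  have hex : ∀ i : Fin m, ∃ j : Fin l,
      Finset.univ.sup' hune (fun j => f i (S j).1) = f i (S j).1 := by
    intro i
    obtain ⟨j, _, hj⟩ := Finset.exists_mem_eq_sup' hune (fun j => f i (S j).1)
    exact ⟨j, hj⟩
  choose jm hjm using hex
  set P : Fin l → Finset (Fin m) := fun jj => Finset.univ.filter (fun i => jm i = jj)
    with hPdef
  have hPdisj : ∀ j j' : Fin l, j ≠ j' → Disjoint (P j) (P j') := by
    intro j j' hjj
    rw [Finset.disjoint_left]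
    intro i hi hi'
    simp only [hPdef, Finset.mem_filter] at hi hi'
    exact hjj (hi.2 ▸ hi'.2 ▸ rfl)
  have hPcover : (Finset.univ : Finset (Fin l)).biUnion P = Finset.univ := by
    apply Finset.Subset.antisymm (fun x _ => Finset.mem_univ x)
    intro i _
    exact Finset.mem_biUnion.2 ⟨jm i, Finset.mem_univ _, by simp [hPdef]⟩
  have hpd : (↑(Finset.univ : Finset (Fin l)) : Set (Fin l)).PairwiseDisjoint P :=
    fun j _ j' _ h => hPdisj j j' h
  -- the chain of inequalities
  have step1 : ∑ j, ∑ i ∈ P j, f i (C (P j))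
      ≤ ∑ i, Finset.univ.sup' ⟨⟨0, by omega⟩, Finset.mem_univ _⟩
          (fun j => f i (C (P j))) := by
    calc ∑ j, ∑ i ∈ P j, f i (C (P j))
        ≤ ∑ j, ∑ i ∈ P j, Finset.univ.sup'
            (⟨⟨0, by omega⟩, Finset.mem_univ _⟩ : (Finset.univ : Finset (Fin l)).Nonempty)
            (fun j' => f i (C (P j'))) := by
          refine Finset.sum_le_sum fun j _ => Finset.sum_le_sum fun i _ => ?_
          exact Finset.le_sup' (fun j' => f i (C (P j'))) (Finset.mem_univ j)
      _ = ∑ i, Finset.univ.sup' ⟨⟨0, by omega⟩, Finset.mem_univ _⟩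
            (fun j => f i (C (P j))) := by
          rw [← Finset.sum_biUnion hpd, hPcover]
  have step2 : ∀ j : Fin l, a * ∑ i ∈ P j, f i (S j).1 ≤ ∑ i ∈ P j, f i (C (P j)) := by
    intro j
    refine le_trans ?_ (hCapprox (P j))
    refine mul_le_mul_of_nonneg_left ?_ ha0
    exact le_ciSup (f := fun T : {T : Finset α // T.card ≤ k} => ∑ i ∈ P j, f i T.1)
      (Set.Finite.bddAbove (Set.finite_range _)) (S j)
  have step3 : ∑ i, Finset.univ.sup' hune (fun j => f i (S j).1)
      = ∑ j, ∑ i ∈ P j, f i (S j).1 := by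
    have : ∀ j : Fin l, ∑ i ∈ P j, f i (S j).1
        = ∑ i ∈ P j, Finset.univ.sup' hune (fun j' => f i (S j').1) := by
      intro j
      refine Finset.sum_congr rfl fun i hi => ?_
      simp only [hPdef, Finset.mem_filter] at hi
      rw [hjm i, hi.2]
    rw [Finset.sum_congr rfl fun j _ => this j, ← Finset.sum_biUnion hpd, hPcover]
  have key : a * ∑ i, Finset.univ.sup' hune (fun j => f i (S j).1)
      ≤ ∑ i, Finset.univ.sup' ⟨⟨0, by omega⟩, Finset.mem_univ _⟩
          (fun j => f i (C (P j))) := by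
    rw [step3, Finset.mul_sum]
    exact le_trans (Finset.sum_le_sum fun j _ => step2 j) step1
  refine le_trans ?_ (le_ciSup (Set.Finite.bddAbove (Set.finite_range _))
    (⟨P, hPdisj, hPcover⟩ : {P : Fin l → Finset (Fin m) //
      (∀ j j', j ≠ j' → Disjoint (P j) (P j')) ∧
        (Finset.univ : Finset (Fin l)).biUnion P = Finset.univ}))
  exact key
end
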